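/- arXiv:2008.06130 — 4 statements merged into one kernel-verified Lean document; each statement's English description precedes it below -/
import Mathlib

section
/- Under Assumptions A1, A2 and A3, the vector E[G₁Y₁] exists (each entry of G₁Y₁ is integrable), the matrix E[G₁X₁ᵀ] is invertible, and the regression parameter is identified by ψ = E[Z₁] and β = (E[G₁X₁ᵀ])⁻¹ E[G₁Y₁]. -/
open MeasureTheory Matrix

/-!
Each coordinate of `G` is a bounded `σ(Z)`-measurable function, so it can be pulled out of the
conditional expectation: `E[G Y] = E[G E[Y | Z]] = E[G Xᵀ] β` by A2. Positive definiteness (A3)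
makes `E[G Xᵀ]` invertible, and `β` is recovered from this moment equation.
-/

section NormalizedVector

variable {ι : Type*} [Fintype ι]

lemma abs_div_sqrt_sum_sq_le_one (x : ι → ℝ) (i : ι) : |x i / √(∑ k, x k ^ 2)| ≤ 1 := by
  rw [abs_div, abs_of_nonneg (Real.sqrt_nonneg _)]
  exact div_le_one_of_le₀
    (Real.abs_le_sqrt (Finset.single_le_sum (fun k _ => sq_nonneg (x k)) (Finset.mem_univ i)))
    (Real.sqrt_nonneg _)

lemma measurable_div_sqrt_sum_sq (i : ι) :
    Measurable fun x : ι → ℝ => x i / √(∑ k, x k ^ 2) := by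
  fun_prop

end NormalizedVector

lemma measurable_fin_cons_one_sub {p : ℕ} (ψ : Fin p → ℝ) :
    Measurable fun z : Fin p → ℝ => (Fin.cons 1 fun i => z i - ψ i : Fin (p + 1) → ℝ) := by
  refine measurable_pi_iff.mpr fun i => Fin.cases ?_ (fun j => ?_) i
  · simp
  · simp only [Fin.cons_succ]
    fun_prop

section MomentEquation

variable {Ω ι : Type*} [Fintype ι] {m m₀ : MeasurableSpace Ω} {μ : Measure[m₀] Ω}

lemma integral_mul_eq_integral_mul_condExp (hm : m ≤ m₀) [SigmaFinite (μ.trim hm)]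
    {g Y : Ω → ℝ} (hg : StronglyMeasurable[m] g) (hgY : Integrable (g * Y) μ)
    (hY : Integrable Y μ) :
    ∫ ω, g ω * Y ω ∂μ = ∫ ω, g ω * μ[Y | m] ω ∂μ :=
  calc ∫ ω, g ω * Y ω ∂μ = ∫ ω, μ[g * Y | m] ω ∂μ := (integral_condExp hm).symm
    _ = ∫ ω, g ω * μ[Y | m] ω ∂μ :=
      integral_congr_ae (condExp_mul_of_stronglyMeasurable_left hg hgY hY)

lemma integral_mul_eq_sum_of_condExp_ae_eq (hm : m ≤ m₀) [SigmaFinite (μ.trim hm)]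
    {g Y : Ω → ℝ} {X : Ω → ι → ℝ} {β : ι → ℝ} (hg : StronglyMeasurable[m] g)
    (hgY : Integrable (g * Y) μ) (hY : Integrable Y μ)
    (hgX : ∀ k, Integrable (fun ω => g ω * X ω k) μ)
    (hcond : μ[Y | m] =ᵐ[μ] fun ω => ∑ k, X ω k * β k) :
    ∫ ω, g ω * Y ω ∂μ = ∑ k, (∫ ω, g ω * X ω k ∂μ) * β k := by
  rw [integral_mul_eq_integral_mul_condExp hm hg hgY hY]
  calc ∫ ω, g ω * μ[Y | m] ω ∂μ = ∫ ω, ∑ k, (g ω * X ω k) * β k ∂μ := by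
        refine integral_congr_ae ?_
        filter_upwards [hcond] with ω hω
        simp only [hω, Finset.mul_sum, mul_assoc]
    _ = ∑ k, (∫ ω, g ω * X ω k ∂μ) * β k := by
        rw [integral_finsetSum _ fun k _ => (hgX k).mul_const (β k)]
        simp only [integral_mul_const]

end MomentEquation

theorem statement1_general
    {Ω : Type*} [MeasurableSpace Ω] (μ : Measure Ω) [IsProbabilityMeasure μ]
    {p : ℕ} (Z : Ω → Fin p → ℝ) (Y : Ω → ℝ)
    (hZmeas : Measurable Z)
    -- Assumption A1
    (hYint : Integrable Y μ)
    (hZint : ∀ i, Integrable (fun ω => Z ω i) μ)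
    (ψ : Fin p → ℝ)
    (X : Ω → Fin (p + 1) → ℝ)
    (hX : X = fun ω => Fin.cons 1 (fun i => Z ω i - ψ i))
    (G : Ω → Fin (p + 1) → ℝ)
    (hG : G = fun ω i => X ω i / Real.sqrt (∑ k, X ω k ^ 2))
    (β : Fin (p + 1) → ℝ)
    -- Assumption A2 : E[Y₁ | Z₁] = X₁ᵀ β almost surely
    (hA2 : μ[Y | MeasurableSpace.comap Z inferInstance]
        =ᵐ[μ] fun ω => ∑ i, X ω i * β i)
    -- Assumption A3 : E[G₁X₁ᵀ] is positive definite
    (hA3 : (Matrix.of fun i k => ∫ ω, G ω i * X ω k ∂μ).PosDef) :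
    (∀ i, Integrable (fun ω => G ω i * Y ω) μ) ∧
      IsUnit (Matrix.of fun i k => ∫ ω, G ω i * X ω k ∂μ).det ∧
      β = (Matrix.of fun i k => ∫ ω, G ω i * X ω k ∂μ)⁻¹.mulVec
            (fun i => ∫ ω, G ω i * Y ω ∂μ) := by
  set m := MeasurableSpace.comap Z inferInstance
  have hm : m ≤ _ := hZmeas.comap_le
  have hXm : Measurable[m] X := hX ▸ (measurable_fin_cons_one_sub ψ).comp (comap_measurable Z)
  have hGm (i) : StronglyMeasurable[m] fun ω => G ω i :=
    hG ▸ ((measurable_div_sqrt_sum_sq i).comp hXm).stronglyMeasurable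
  have hGint (i) {f : Ω → ℝ} (hf : Integrable f μ) : Integrable (fun ω => G ω i * f ω) μ :=
    hf.bdd_mul (c := 1) ((hGm i).mono hm).aestronglyMeasurable
      (.of_forall fun ω => by simpa only [hG, Real.norm_eq_abs] using abs_div_sqrt_sum_sq_le_one (X ω) i)
  have hXint (k) : Integrable (fun ω => X ω k) μ := by
    subst hX
    refine Fin.cases ?_ (fun j => ?_) k
    · simp
    · simp only [Fin.cons_succ]
      exact (hZint j).sub (integrable_const (ψ j))
  set M := Matrix.of fun i k => ∫ ω, G ω i * X ω k ∂μ
  have hdet : IsUnit M.det := isUnit_iff_ne_zero.mpr hA3.det_pos.ne'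
  have hmoment : (fun i => ∫ ω, G ω i * Y ω ∂μ) = M *ᵥ β := funext fun i =>
    integral_mul_eq_sum_of_condExp_ae_eq hm (hGm i) (hGint i hYint) hYint
      (fun k => hGint i (hXint k)) hA2
  have := M.invertibleOfIsUnitDet hdet
  exact ⟨fun i => hGint i hYint, hdet, (inv_mulVec_eq_vec hmoment).symm⟩

/-- Under A1–A3, `E[G₁Y₁]` exists, `E[G₁X₁ᵀ]` is invertible,
and `β` is identified: `ψ = E[Z₁]` and `β = (E[G₁X₁ᵀ])⁻¹ E[G₁Y₁]`. -/
theorem statement1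
    {Ω : Type*} [MeasurableSpace Ω] (μ : Measure Ω) [IsProbabilityMeasure μ]
    {p : ℕ} (Z : Ω → Fin p → ℝ) (Y : Ω → ℝ)
    (hZmeas : Measurable Z) (hYmeas : Measurable Y)
    -- Assumption A1
    (hYint : Integrable Y μ)
    (hZint : ∀ i, Integrable (fun ω => Z ω i) μ)
    (ψ : Fin p → ℝ) (hψ : ψ = fun i => ∫ ω, Z ω i ∂μ)
    (X : Ω → Fin (p + 1) → ℝ)
    (hX : X = fun ω => Fin.cons 1 (fun i => Z ω i - ψ i))
    (G : Ω → Fin (p + 1) → ℝ)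
    (hG : G = fun ω i => X ω i / Real.sqrt (∑ k, X ω k ^ 2))
    (β : Fin (p + 1) → ℝ)
    -- Assumption A2 : E[Y₁ | Z₁] = X₁ᵀ β almost surely
    (hA2 : μ[Y | MeasurableSpace.comap Z inferInstance]
        =ᵐ[μ] fun ω => ∑ i, X ω i * β i)
    -- Assumption A3 : E[G₁X₁ᵀ] is positive definite
    (hA3 : (Matrix.of fun i k => ∫ ω, G ω i * X ω k ∂μ).PosDef) :
    (∀ i, Integrable (fun ω => G ω i * Y ω) μ) ∧
      IsUnit (Matrix.of fun i k => ∫ ω, G ω i * X ω k ∂μ).det ∧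
      β = (Matrix.of fun i k => ∫ ω, G ω i * X ω k ∂μ)⁻¹.mulVec
            (fun i => ∫ ω, G ω i * Y ω ∂μ) :=
  statement1_general μ Z Y hZmeas hYint hZint ψ X hX G hG β hA2 hA3
end

section
/- Suppose the (p+1)×(p+1) matrix S_{G,X} = n⁻¹ Σ_{j=1}ⁿ G_j X_jᵀ is positive definite. Then the weighted Gram matrix S̃ = Σ_{j=1}ⁿ w_j (z_j − Z̃)(z_j − Z̃)ᵀ is invertible, and the components of β̂ = S_{G,X}⁻¹ S_{G,Y} satisfy β̂_{1:p} = S̃⁻¹ Σ_{j=1}ⁿ w_j (z_j − Z̃)(y_j − Ỹ) and β̂₀ = Ỹ − (Z̃ − Z̄)ᵀ β̂_{1:p}, where β̂ = (β̂₀, β̂_{1:p}ᵀ)ᵀ. -/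
open Matrix Finset

/-!
Since `G_j = c_j X_j` with `c_j = ‖X_j‖⁻¹ = (∑ c) w_j`, the matrix `S_{G,X}` and the vector
`S_{G,Y}` are the same positive multiple of `∑ w_j X_j X_jᵀ` and of `∑ w_j y_j X_j`, so `β̂`
solves the weighted normal equations with intercept. For `s = (s₀, t)` one has
`X_j ⬝ s = (s₀ + (Z̃ - Z̄) ⬝ t) + (z_j - Z̃) ⬝ t`, and the last term has weighted mean zero.
Taking `s₀ = -(Z̃ - Z̄) ⬝ t` turns the quadratic form of `∑ w_j X_j X_jᵀ` into that of `S̃`,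
which is therefore positive definite; and the normal equations split into the intercept
equation, solved by `β̂₀ = Ỹ - (Z̃ - Z̄) ⬝ β̂_{1:p}`, and the centred equations
`S̃ β̂_{1:p} = ∑ w_j (y_j - Ỹ)(z_j - Z̃)`.
-/

section WeightedGram

variable {ι m R : Type*} [Fintype ι] [CommRing R]

def weightedGram (w : ι → R) (x : ι → m → R) : Matrix m m R :=
  ∑ j, w j • vecMulVec (x j) (x j)

theorem weightedGram_mulVec [Fintype m] (w : ι → R) (x : ι → m → R) (s : m → R) :
    weightedGram w x *ᵥ s = ∑ j, (w j * (x j ⬝ᵥ s)) • x j := by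
  simp only [weightedGram, sum_mulVec, smul_mulVec, vecMulVec_mulVec, op_smul_eq_smul, smul_smul]

theorem dotProduct_weightedGram_mulVec [Fintype m] (w : ι → R) (x : ι → m → R) (s : m → R) :
    s ⬝ᵥ weightedGram w x *ᵥ s = ∑ j, w j * (x j ⬝ᵥ s) ^ 2 := by
  simp only [weightedGram_mulVec, dotProduct_sum, dotProduct_smul, smul_eq_mul]
  exact sum_congr rfl fun j _ => by rw [dotProduct_comm]; ring

theorem isHermitian_weightedGram [StarRing R] [TrivialStar R] (w : ι → R) (x : ι → m → R) :
    (weightedGram w x).IsHermitian := by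
  ext i k
  simp only [weightedGram, conjTranspose_apply, star_trivial, Matrix.sum_apply,
    Matrix.smul_apply, vecMulVec_apply, mul_comm]

end WeightedGram

def weightedMean {ι R M : Type*} [Fintype ι] [Semiring R] [AddCommMonoid M] [Module R M]
    (w : ι → R) (z : ι → M) : M :=
  ∑ j, w j • z j

theorem sum_smul_sub_weightedMean {ι R M : Type*} [Fintype ι] [Ring R] [AddCommGroup M]
    [Module R M] {w : ι → R} (hw : ∑ j, w j = 1) (z : ι → M) :
    ∑ j, w j • (z j - weightedMean w z) = 0 := by
  simp only [smul_sub, sum_sub_distrib, ← Finset.sum_smul, hw, one_smul, weightedMean, sub_self]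

theorem sqrt_sum_sq_pos_of_ne_zero {ι : Type*} [Fintype ι] {x : ι → ℝ} (hx : x ≠ 0) :
    0 < Real.sqrt (∑ k, x k ^ 2) := by
  obtain ⟨i, hi⟩ := Function.ne_iff.1 hx
  exact Real.sqrt_pos.2 ((pow_two_pos_of_ne_zero hi).trans_le
    (single_le_sum (fun k _ => sq_nonneg (x k)) (mem_univ i)))

theorem sum_eq_one_and_exists_pos_eq_smul_of_div_sqrt {ι m : Type*} [Fintype ι] [Nonempty ι]
    [Fintype m] {X G : ι → m → ℝ} {w : ι → ℝ} (hX : ∀ j, X j ≠ 0)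
    (hG : G = fun j i => X j i / Real.sqrt (∑ k, X j k ^ 2))
    (hw : w = fun j => (Real.sqrt (∑ k, X j k ^ 2))⁻¹ / ∑ i, (Real.sqrt (∑ k, X i k ^ 2))⁻¹) :
    ∑ j, w j = 1 ∧ ∃ C > 0, ∀ j, G j = (C * w j) • X j := by
  set c : ι → ℝ := fun j => (Real.sqrt (∑ k, X j k ^ 2))⁻¹
  have hC : 0 < ∑ j, c j :=
    sum_pos (fun j _ => inv_pos.2 (sqrt_sum_sq_pos_of_ne_zero (hX j))) univ_nonempty
  refine ⟨by simp only [hw, ← sum_div]; exact div_self hC.ne', _, hC, fun j => ?_⟩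
  rw [hw, mul_div_cancel₀ _ hC.ne', hG]
  ext i
  simp [div_eq_inv_mul]

section Intercept

variable {n p : ℕ} {R : Type*} [CommRing R]

theorem cons_one_sub_dotProduct_cons (a b m : Fin p → R) (s₀ : R) (t : Fin p → R) :
    (Fin.cons 1 (a - m) : Fin (p + 1) → R) ⬝ᵥ Fin.cons s₀ t =
      s₀ + (b - m) ⬝ᵥ t + (a - b) ⬝ᵥ t := by
  change vecCons 1 (a - m) ⬝ᵥ vecCons s₀ t = _
  rw [cons_dotProduct_cons, one_mul, add_assoc, ← add_dotProduct, add_comm (b - m),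
    sub_add_sub_cancel]

theorem sum_smul_cons_one (a : Fin n → R) (v : Fin n → Fin p → R) :
    ∑ j, a j • (Fin.cons 1 (v j) : Fin (p + 1) → R) = Fin.cons (∑ j, a j) (∑ j, a j • v j) := by
  ext i
  refine Fin.cases ?_ (fun i => ?_) i <;> simp [Finset.sum_apply]

theorem posDef_weightedGram_sub_of_posDef_weightedGram_cons_one [PartialOrder R] [StarRing R]
    [TrivialStar R] (w : Fin n → R) (z : Fin n → Fin p → R) (m b : Fin p → R)
    (h : (weightedGram w fun j => (Fin.cons 1 (z j - m) : Fin (p + 1) → R)).PosDef) :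
    (weightedGram w fun j => z j - b).PosDef := by
  refine .of_dotProduct_mulVec_pos (isHermitian_weightedGram _ _) fun t ht => ?_
  have hs : (Fin.cons (-((b - m) ⬝ᵥ t)) t : Fin (p + 1) → R) ≠ 0 := fun h0 =>
    ht (congrArg Fin.tail h0)
  have key := h.dotProduct_mulVec_pos hs
  simpa only [star_trivial, dotProduct_weightedGram_mulVec, cons_one_sub_dotProduct_cons _ b,
    neg_add_cancel, zero_add] using key

theorem weightedGram_cons_one_mulVec_cons {w : Fin n → R} (hw : ∑ j, w j = 1)
    (z : Fin n → Fin p → R) (y : Fin n → R) (m : Fin p → R) {β : Fin p → R}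
    (hβ : (weightedGram w fun j => z j - weightedMean w z) *ᵥ β =
      ∑ j, (w j * (y j - weightedMean w y)) • (z j - weightedMean w z)) :
    (weightedGram w fun j => (Fin.cons 1 (z j - m) : Fin (p + 1) → R)) *ᵥ
        Fin.cons (weightedMean w y - (weightedMean w z - m) ⬝ᵥ β) β =
      ∑ j, (w j * y j) • (Fin.cons 1 (z j - m) : Fin (p + 1) → R) := by
  set zbar := weightedMean w z
  set ybar := weightedMean w y
  -- the weighted residuals; the normal equations say `∑ r_j (1, z_j - m) = 0`
  set r : Fin n → R := fun j => w j * ((z j - zbar) ⬝ᵥ β - (y j - ybar))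
  have hr : ∑ j, r j = 0 := by
    have hz : ∑ j, w j * ((z j - zbar) ⬝ᵥ β) = 0 := by
      simpa only [sum_dotProduct, smul_dotProduct, zero_dotProduct, smul_eq_mul]
        using congrArg (· ⬝ᵥ β) (sum_smul_sub_weightedMean hw z)
    have hy : ∑ j, w j * (y j - ybar) = 0 := sum_smul_sub_weightedMean hw y
    simp only [r, mul_sub _ ((z _ - zbar) ⬝ᵥ β), sum_sub_distrib, hz, hy, sub_zero]
  have hrz : ∑ j, r j • (z j - zbar) = 0 := by
    rw [weightedGram_mulVec] at hβ
    simp only [r, mul_sub, sub_smul, sum_sub_distrib, hβ, sub_self]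
  have hrm : ∑ j, r j • (z j - m) = 0 := by
    have hsplit : ∀ j, z j - m = (z j - zbar) + (zbar - m) := fun j =>
      (sub_add_sub_cancel _ _ _).symm
    simp only [hsplit, smul_add, sum_add_distrib, hrz, ← sum_smul, hr, zero_smul, add_zero]
  have hres : ∀ j, w j * (ybar + (z j - zbar) ⬝ᵥ β) - w j * y j = r j := fun j => by
    simp only [r]; ring
  rw [weightedGram_mulVec, ← sub_eq_zero, ← sum_sub_distrib]
  simp only [cons_one_sub_dotProduct_cons _ zbar, sub_add_cancel, ← sub_smul, hres,
    sum_smul_cons_one, hr, hrm]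
  exact cons_zero_zero

theorem inv_weightedGram_cons_one_mulVec {K : Type*} [Field K] [PartialOrder K] [StarRing K]
    [TrivialStar K] {w : Fin n → K} (hw : ∑ j, w j = 1) (z : Fin n → Fin p → K)
    (y : Fin n → K) (m : Fin p → K)
    (hM : (weightedGram w fun j => (Fin.cons 1 (z j - m) : Fin (p + 1) → K)).PosDef)
    {β : Fin p → K} (hβ : β = (weightedGram w fun j => z j - weightedMean w z)⁻¹ *ᵥ
      ∑ j, (w j * (y j - weightedMean w y)) • (z j - weightedMean w z)) :
    IsUnit (weightedGram w fun j => z j - weightedMean w z).det ∧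
      (weightedGram w fun j => (Fin.cons 1 (z j - m) : Fin (p + 1) → K))⁻¹ *ᵥ
          ∑ j, (w j * y j) • (Fin.cons 1 (z j - m) : Fin (p + 1) → K) =
        Fin.cons (weightedMean w y - (weightedMean w z - m) ⬝ᵥ β) β := by
  have hS := (posDef_weightedGram_sub_of_posDef_weightedGram_cons_one w z m
    (weightedMean w z) hM).isUnit
  rw [isUnit_iff_isUnit_det] at hS
  refine ⟨hS, ?_⟩
  rw [← weightedGram_cons_one_mulVec_cons hw z y m (β := β) (by rw [hβ, mulVec_mulVec,
      mul_nonsing_inv _ hS, one_mulVec]), mulVec_mulVec,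
    nonsing_inv_mul _ ((isUnit_iff_isUnit_det _).1 hM.isUnit), one_mulVec]

end Intercept

theorem inv_smul_mulVec_smul {K n : Type*} [Field K] [Fintype n] [DecidableEq n] {k : K}
    (hk : k ≠ 0) {A : Matrix n n K} (hA : IsUnit A.det) (v : n → K) :
    (k • A)⁻¹ *ᵥ (k • v) = A⁻¹ *ᵥ v := by
  have := invertibleOfNonzero hk
  rw [inv_smul A k hA, mulVec_smul, smul_mulVec, smul_smul, mul_invOf_self, one_smul]

theorem statement2_general {p n : ℕ} (hn : 0 < n)
    (z : Fin n → Fin p → ℝ) (y : Fin n → ℝ)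
    (Zbar : Fin p → ℝ)
    (X : Fin n → Fin (p + 1) → ℝ)
    (hX : X = fun j => Fin.cons 1 (fun i => z j i - Zbar i))
    (G : Fin n → Fin (p + 1) → ℝ)
    (hG : G = fun j i => X j i / Real.sqrt (∑ k, X j k ^ 2))
    (SGX : Matrix (Fin (p + 1)) (Fin (p + 1)) ℝ)
    (hSGX : SGX = (n : ℝ)⁻¹ • ∑ j, Matrix.of fun i k => G j i * X j k)
    (SGY : Fin (p + 1) → ℝ)
    (hSGY : SGY = (n : ℝ)⁻¹ • ∑ j, y j • G j)
    (βhat : Fin (p + 1) → ℝ) (hβhat : βhat = SGX⁻¹.mulVec SGY)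
    (w : Fin n → ℝ)
    (hw : w = fun j => (Real.sqrt (∑ k, X j k ^ 2))⁻¹ /
            ∑ i, (Real.sqrt (∑ k, X i k ^ 2))⁻¹)
    (Ytilde : ℝ) (hYtilde : Ytilde = ∑ j, w j * y j)
    (Ztilde : Fin p → ℝ) (hZtilde : Ztilde = fun i => ∑ j, w j * z j i)
    (Stilde : Matrix (Fin p) (Fin p) ℝ)
    (hStilde : Stilde = ∑ j, w j • Matrix.of
        (fun i k => (z j i - Ztilde i) * (z j k - Ztilde k)))
    (hpos : SGX.PosDef) :
    IsUnit Stilde.det ∧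
      (fun i : Fin p => βhat i.succ) =
        Stilde⁻¹.mulVec (∑ j, w j • fun i => (z j i - Ztilde i) * (y j - Ytilde)) ∧
      βhat 0 = Ytilde - ∑ i, (Ztilde i - Zbar i) * βhat i.succ := by
  have hX' : X = fun j => Fin.cons 1 (z j - Zbar) := hX
  have : Nonempty (Fin n) := ⟨⟨0, hn⟩⟩
  obtain ⟨hw1, C, hC, hG'⟩ := sum_eq_one_and_exists_pos_eq_smul_of_div_sqrt
    (fun j h => one_ne_zero (α := ℝ) (by simpa [hX'] using congrFun h 0)) hG hw
  have hκ : 0 < (n : ℝ)⁻¹ * C := mul_pos (by positivity) hC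
  have hSGX' : SGX = ((n : ℝ)⁻¹ * C) • weightedGram w X := by
    ext i k
    simp only [hSGX, weightedGram, hG', Matrix.smul_apply, Matrix.sum_apply, of_apply,
      vecMulVec_apply, Pi.smul_apply, smul_eq_mul, mul_sum, mul_assoc]
  have hSGY' : SGY = ((n : ℝ)⁻¹ * C) • ∑ j, (w j * y j) • X j := by
    ext i
    simp only [hSGY, hG', Pi.smul_apply, Finset.sum_apply, smul_eq_mul, mul_sum, mul_assoc]
    exact sum_congr rfl fun j _ => by ring
  have hM : (weightedGram w X).PosDef := by
    have := hpos.smul (inv_pos.2 hκ)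
    rwa [hSGX', smul_smul, inv_mul_cancel₀ hκ.ne', one_smul] at this
  obtain rfl : Ztilde = weightedMean w z := by
    rw [hZtilde]; ext i; simp [weightedMean, Finset.sum_apply]
  obtain rfl : Ytilde = weightedMean w y := hYtilde
  set v := ∑ j, w j • fun i => (z j i - weightedMean w z i) * (y j - weightedMean w y)
  have hv : v = ∑ j, (w j * (y j - weightedMean w y)) • (z j - weightedMean w z) := by
    ext i
    simp only [v, Finset.sum_apply, Pi.smul_apply, smul_eq_mul, Pi.sub_apply]
    exact sum_congr rfl fun j _ => by ring
  have hS : Stilde = weightedGram w fun j => z j - weightedMean w z := hStilde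
  obtain ⟨hdet, hsol⟩ := inv_weightedGram_cons_one_mulVec hw1 z y Zbar (hX' ▸ hM)
    (β := Stilde⁻¹ *ᵥ v) (by rw [hS, hv])
  have hβ : βhat = Fin.cons (weightedMean w y - (weightedMean w z - Zbar) ⬝ᵥ Stilde⁻¹ *ᵥ v)
      (Stilde⁻¹ *ᵥ v) := by
    rw [hβhat, hSGX', hSGY', inv_smul_mulVec_smul hκ.ne' hM.det_pos.ne'.isUnit, hX', hsol]
  exact ⟨hS ▸ hdet, by rw [hβ]; rfl, by rw [hβ]; rfl⟩

/-- If `S_{G,X}` is positive definite then the weighted Gram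
matrix `S̃` is invertible, and the components of `β̂ = S_{G,X}⁻¹ S_{G,Y}`
satisfy `β̂_{1:p} = S̃⁻¹ Σ w_j (z_j − Z̃)(y_j − Ỹ)` and
`β̂₀ = Ỹ − (Z̃ − Z̄)ᵀ β̂_{1:p}`. -/
theorem statement2 {p n : ℕ} (hn : 0 < n)
    (z : Fin n → Fin p → ℝ) (y : Fin n → ℝ)
    (Zbar : Fin p → ℝ) (hZbar : Zbar = fun i => (n : ℝ)⁻¹ * ∑ j, z j i)
    (X : Fin n → Fin (p + 1) → ℝ)
    (hX : X = fun j => Fin.cons 1 (fun i => z j i - Zbar i))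
    (G : Fin n → Fin (p + 1) → ℝ)
    (hG : G = fun j i => X j i / Real.sqrt (∑ k, X j k ^ 2))
    (SGX : Matrix (Fin (p + 1)) (Fin (p + 1)) ℝ)
    (hSGX : SGX = (n : ℝ)⁻¹ • ∑ j, Matrix.of fun i k => G j i * X j k)
    (SGY : Fin (p + 1) → ℝ)
    (hSGY : SGY = (n : ℝ)⁻¹ • ∑ j, y j • G j)
    (βhat : Fin (p + 1) → ℝ) (hβhat : βhat = SGX⁻¹.mulVec SGY)
    (w : Fin n → ℝ)
    (hw : w = fun j => (Real.sqrt (∑ k, X j k ^ 2))⁻¹ /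
            ∑ i, (Real.sqrt (∑ k, X i k ^ 2))⁻¹)
    (Ytilde : ℝ) (hYtilde : Ytilde = ∑ j, w j * y j)
    (Ztilde : Fin p → ℝ) (hZtilde : Ztilde = fun i => ∑ j, w j * z j i)
    (Stilde : Matrix (Fin p) (Fin p) ℝ)
    (hStilde : Stilde = ∑ j, w j • Matrix.of
        (fun i k => (z j i - Ztilde i) * (z j k - Ztilde k)))
    (hpos : SGX.PosDef) :
    IsUnit Stilde.det ∧
      (fun i : Fin p => βhat i.succ) =
        Stilde⁻¹.mulVec (∑ j, w j • fun i => (z j i - Ztilde i) * (y j - Ytilde)) ∧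
      βhat 0 = Ytilde - ∑ i, (Ztilde i - Zbar i) * βhat i.succ :=
  statement2_general hn z y Zbar X hX G hG SGX hSGX SGY hSGY βhat hβhat w hw Ytilde hYtilde Ztilde
    hZtilde Stilde hStilde hpos
end

section
/- Let (X_j, Y_j), j ≥ 1, be i.i.d. pairs of real random variables with E|Y₁| < ∞, 0 < E|X₁| < ∞, and E[Y₁ | X₁] = β₁ X₁ almost surely for some β₁ ∈ ℝ. Then the estimator β̂₁ⁿ = (Σ_{j=1}ⁿ sign(X_j) Y_j) / (Σ_{j=1}ⁿ |X_j|) (defined arbitrarily on the event where the denominator vanishes) converges almost surely, and hence in probability, to β₁ as n → ∞. -/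
/-!
Put `Z_j = sign(X_j) Y_j` and `W_j = |X_j|`, so that `β̂₁ⁿ` is the ratio of the averages of the
`Z_j` and of the `W_j`. Both are i.i.d. integrable sequences, so by the strong law of large
numbers these averages converge a.s. to `E[Z₁]` and `E[W₁] = E|X₁| > 0`. Pulling the
`σ(X₁)`-measurable factor `sign(X₁)` out of the conditional expectation gives
`E[Z₁] = E[sign(X₁) β₁ X₁] = β₁ E|X₁|`, so the ratio tends to `β₁`.
-/

open MeasureTheory ProbabilityTheory Filter Finset Topology

namespace Real

lemma measurable_sign : Measurable Real.sign :=
  Measurable.ite (measurableSet_lt measurable_id measurable_const) measurable_const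
    (Measurable.ite (measurableSet_lt measurable_const measurable_id) measurable_const
      measurable_const)

lemma abs_sign_le_one (x : ℝ) : |Real.sign x| ≤ 1 := by
  rcases Real.sign_apply_eq x with h | h | h <;> simp [h]

lemma sign_mul_self_eq_abs (x : ℝ) : Real.sign x * x = |x| := by
  rcases lt_trichotomy x 0 with h | rfl | h
  · rw [Real.sign_of_neg h, abs_of_neg h]; ring
  · simp
  · rw [Real.sign_of_pos h, abs_of_pos h]; ring

end Real

lemma tendsto_sum_div_sum_of_tendsto_average {a b : ℕ → ℝ} {A B : ℝ}
    (ha : Tendsto (fun n : ℕ => (n : ℝ)⁻¹ * ∑ i ∈ range n, a i) atTop (𝓝 A))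
    (hb : Tendsto (fun n : ℕ => (n : ℝ)⁻¹ * ∑ i ∈ range n, b i) atTop (𝓝 B)) (hB : B ≠ 0) :
    Tendsto (fun n => (∑ i ∈ range n, a i) / ∑ i ∈ range n, b i) atTop (𝓝 (A / B)) := by
  refine (ha.div hb hB).congr' ?_
  filter_upwards [eventually_ne_atTop 0] with n hn
  exact mul_div_mul_left _ _ (inv_ne_zero (Nat.cast_ne_zero.2 hn))

section

variable {Ω : Type*} [MeasurableSpace Ω] {μ : Measure Ω}

lemma ae_tendsto_average_comp_of_iid [IsProbabilityMeasure μ] {E : Type*} [MeasurableSpace E]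
    {V : ℕ → Ω → E} (hV : ∀ j, Measurable (V j)) (hindep : iIndepFun V μ)
    (hident : ∀ j, μ.map (V j) = μ.map (V 0)) {f : E → ℝ} (hf : Measurable f)
    (hint : Integrable (fun ω => f (V 0 ω)) μ) :
    ∀ᵐ ω ∂μ, Tendsto (fun n : ℕ => (n : ℝ)⁻¹ * ∑ i ∈ range n, f (V i ω)) atTop
      (𝓝 (∫ ω, f (V 0 ω) ∂μ)) :=
  strong_law_ae (fun i ω => f (V i ω)) hint
    (fun _ _ hij => (hindep.indepFun hij).comp hf hf)
    (fun i => (IdentDistrib.mk (hV i).aemeasurable (hV 0).aemeasurable (hident i)).comp hf)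

lemma MeasureTheory.Integrable.sign_mul {X Y : Ω → ℝ} (hX : Measurable X) (hY : Integrable Y μ) :
    Integrable (fun ω => Real.sign (X ω) * Y ω) μ :=
  hY.bdd_mul (Real.measurable_sign.comp hX).aestronglyMeasurable
    (.of_forall fun ω => Real.abs_sign_le_one (X ω))

lemma integral_sign_mul_eq_of_condExp_eq_mul [IsFiniteMeasure μ] {X Y : Ω → ℝ}
    (hX : Measurable X) (hY : Integrable Y μ) {β : ℝ}
    (hcond : μ[Y | MeasurableSpace.comap X inferInstance] =ᵐ[μ] fun ω => β * X ω) :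
    ∫ ω, Real.sign (X ω) * Y ω ∂μ = β * ∫ ω, |X ω| ∂μ := by
  have hint := hY.sign_mul hX
  set m := MeasurableSpace.comap X inferInstance
  have hsign : StronglyMeasurable[m] (fun ω => Real.sign (X ω)) :=
    (Real.measurable_sign.comp (comap_measurable X)).stronglyMeasurable
  have hpull : μ[(fun ω => Real.sign (X ω)) * Y | m] =ᵐ[μ] fun ω => β * |X ω| := by
    filter_upwards [condExp_mul_of_stronglyMeasurable_left hsign hint hY, hcond]
      with ω h1 h2
    rw [h1, Pi.mul_apply, h2, mul_left_comm, Real.sign_mul_self_eq_abs]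
  calc ∫ ω, Real.sign (X ω) * Y ω ∂μ = ∫ ω, μ[(fun ω => Real.sign (X ω)) * Y | m] ω ∂μ :=
        (integral_condExp hX.comap_le).symm
    _ = β * ∫ ω, |X ω| ∂μ := by rw [integral_congr_ae hpull, integral_const_mul]

end

/-- For i.i.d. pairs `(X_j, Y_j)` with `E|Y₁| < ∞`,
`0 < E|X₁| < ∞` and `E[Y₁ | X₁] = β₁X₁` a.s., the estimator
`β̂₁ⁿ = (Σ sign(X_j)Y_j)/(Σ |X_j|)` converges almost surely, and hence in
probability, to `β₁`. -/
theorem statement8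
    {Ω : Type*} [MeasurableSpace Ω] (μ : Measure Ω) [IsProbabilityMeasure μ]
    (X Y : ℕ → Ω → ℝ)
    (hmeas : ∀ j, Measurable (fun ω => (X j ω, Y j ω)))
    -- i.i.d. pairs
    (hindep : iIndepFun (fun j ω => (X j ω, Y j ω)) μ)
    (hident : ∀ j, μ.map (fun ω => (X j ω, Y j ω)) = μ.map (fun ω => (X 0 ω, Y 0 ω)))
    (hYint : Integrable (Y 0) μ) (hXint : Integrable (X 0) μ)
    (hXpos : 0 < ∫ ω, |X 0 ω| ∂μ)
    (β1 : ℝ)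
    (hA2 : μ[Y 0 | MeasurableSpace.comap (X 0) inferInstance]
        =ᵐ[μ] fun ω => β1 * X 0 ω)
    (βhat : ℕ → Ω → ℝ)
    (hβhat : βhat = fun (n : ℕ) (ω : Ω) =>
      (∑ j ∈ Finset.range n, Real.sign (X j ω) * Y j ω) /
        ∑ j ∈ Finset.range n, |X j ω|) :
    (∀ᵐ ω ∂μ, Tendsto (fun n => βhat n ω) atTop (nhds β1)) ∧
      TendstoInMeasure μ (fun n ω => βhat n ω) atTop (fun _ => β1) := by
  subst hβhat
  have hX : ∀ j, Measurable (X j) := fun j => (hmeas j).fst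
  have hsignY : Measurable fun p : ℝ × ℝ => Real.sign p.1 * p.2 :=
    (Real.measurable_sign.comp measurable_fst).mul measurable_snd
  have hEZ := integral_sign_mul_eq_of_condExp_eq_mul (hX 0) hYint hA2
  have hae : ∀ᵐ ω ∂μ, Tendsto (fun n => (∑ j ∈ range n, Real.sign (X j ω) * Y j ω) /
      ∑ j ∈ range n, |X j ω|) atTop (𝓝 β1) := by
    filter_upwards [ae_tendsto_average_comp_of_iid hmeas hindep hident hsignY (hYint.sign_mul (hX 0)),
      ae_tendsto_average_comp_of_iid hmeas hindep hident measurable_fst.abs hXint.abs]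
      with ω hZ hW
    have hlim := tendsto_sum_div_sum_of_tendsto_average hZ hW hXpos.ne'
    rwa [hEZ, mul_div_cancel_right₀ _ hXpos.ne'] at hlim
  refine ⟨hae, tendstoInMeasure_of_tendsto_ae (fun n => ?_) hae⟩
  exact ((Finset.measurable_sum _ fun j _ => hsignY.comp (hmeas j)).div
    (Finset.measurable_sum _ fun j _ => (hX j).abs)).aestronglyMeasurable
end

section
/- Let U be a real random variable whose law has density f with respect to Lebesgue measure and which satisfies P(U ≤ 0) = 1/2 (median zero). Then for every a ∈ ℝ the (always integrable) random variable |U − a| − |U| satisfies E[|U − a| − |U|] = 2 ∫_a^0 (s − a) f(s) ds, where ∫_a^0 = −∫_0^a when a > 0. In particular this expectation is nonnegative for every a. -/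
/-!
Pointwise, `|s - a| - |s| = a (2·𝟙{s ≤ 0} - 1) + 2 |s - a| 𝟙{s ∈ uIoc 0 a}`. Integrating against
the law of `U`, the median condition `P(U ≤ 0) = 1/2` kills the first term, leaving
`2 ∫_{uIoc 0 a} |s - a| f(s) ds`, which is `2 ∫_a^0 (s - a) f(s) ds` and visibly nonnegative.
-/

open MeasureTheory Set

theorem abs_sub_sub_abs_eq_indicator (a s : ℝ) :
    |s - a| - |s| =
      (Iic 0).indicator (fun _ => 2 * a) s - a + (uIoc 0 a).indicator (fun s => 2 * |s - a|) s := by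
  classical
  simp only [indicator_apply, mem_Iic, mem_uIoc]
  split_ifs <;> cases abs_cases (s - a) <;> cases abs_cases s <;> grind

theorem abs_sub_le_abs_of_mem_uIoc {a s : ℝ} (hs : s ∈ uIoc 0 a) : |s - a| ≤ |a| := by
  simpa [abs_sub_comm] using abs_sub_right_of_mem_uIcc (uIoc_subset_uIcc hs)

theorem integrable_abs_sub_sub_abs {Ω : Type*} [MeasurableSpace Ω] {μ : Measure Ω}
    [IsFiniteMeasure μ] {X : Ω → ℝ} (hX : AEStronglyMeasurable X μ) (a : ℝ) :
    Integrable (fun ω => |X ω - a| - |X ω|) μ :=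
  .of_bound ((hX.sub aestronglyMeasurable_const).norm.sub hX.norm) |a| <|
    .of_forall fun ω => by
      simpa [Real.norm_eq_abs] using abs_abs_sub_abs_le_abs_sub (X ω - a) (X ω)

theorem integral_abs_sub_sub_abs_of_median_zero (ν : Measure ℝ) [IsProbabilityMeasure ν]
    (hmed : ν (Iic 0) = 1 / 2) (a : ℝ) :
    ∫ s, (|s - a| - |s|) ∂ν = 2 * ∫ s in uIoc 0 a, |s - a| ∂ν := by
  have hstep : Integrable (fun s => (Iic 0).indicator (fun _ => 2 * a) s - a) ν :=
    ((integrable_const _).indicator measurableSet_Iic).sub (integrable_const a)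
  have hbump : Integrable ((uIoc 0 a).indicator fun s => 2 * |s - a|) ν := by
    refine (integrable_indicator_iff measurableSet_uIoc).2 <|
      .of_bound (measure_lt_top _ _) (by fun_prop) (2 * |a|) ?_
    filter_upwards [ae_restrict_mem measurableSet_uIoc] with s hs
    simpa [abs_mul] using abs_sub_le_abs_of_mem_uIoc hs
  have hmed' : ν.real (Iic 0) = 1 / 2 := by simp [measureReal_def, hmed]
  simp_rw [abs_sub_sub_abs_eq_indicator]
  rw [integral_add hstep hbump,
    integral_sub ((integrable_const _).indicator measurableSet_Iic) (integrable_const a),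
    integral_indicator_const _ measurableSet_Iic, integral_indicator measurableSet_uIoc,
    integral_const_mul, hmed']
  simp

theorem intervalIntegral_sub_mul_eq_setIntegral_uIoc (g : ℝ → ℝ) (a : ℝ) :
    ∫ s in a..0, (s - a) * g s = ∫ s in uIoc 0 a, |s - a| * g s := by
  rcases le_or_gt a 0 with ha | ha
  · rw [uIoc_of_ge ha, intervalIntegral.integral_of_le ha]
    refine setIntegral_congr_fun measurableSet_Ioc fun s hs => ?_
    rw [abs_of_nonneg (by linarith [hs.1])]
  · rw [uIoc_of_le ha.le, intervalIntegral.integral_of_ge ha.le, ← integral_neg]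
    refine setIntegral_congr_fun measurableSet_Ioc fun s hs => ?_
    rw [abs_of_nonpos (by linarith [hs.2])]
    ring

/-- If the law of `U` has density `f` with respect to
Lebesgue measure and `P(U ≤ 0) = 1/2`, then for every `a ∈ ℝ` the (always
integrable) random variable `|U − a| − |U|` satisfies
`E[|U − a| − |U|] = 2 ∫_a^0 (s − a) f(s) ds`, and this expectation is
nonnegative. -/
theorem statement13
    {Ω : Type*} [MeasurableSpace Ω] (μ : Measure Ω) [IsProbabilityMeasure μ]
    (U : Ω → ℝ) (hUmeas : Measurable U)
    (f : ℝ → ℝ) (hfmeas : Measurable f) (hf0 : ∀ s, 0 ≤ f s)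
    (hdens : μ.map U = MeasureTheory.volume.withDensity fun s => ENNReal.ofReal (f s))
    (hmed : μ {ω | U ω ≤ 0} = 1 / 2) :
    ∀ a : ℝ,
      Integrable (fun ω => |U ω - a| - |U ω|) μ ∧
      (∫ ω, (|U ω - a| - |U ω|) ∂μ) = 2 * ∫ s in a..(0 : ℝ), (s - a) * f s ∧
      0 ≤ ∫ ω, (|U ω - a| - |U ω|) ∂μ := by
  intro a
  have := Measure.isProbabilityMeasure_map (μ := μ) hUmeas.aemeasurable
  have hlaw_med : μ.map U (Iic 0) = 1 / 2 := by
    rwa [Measure.map_apply hUmeas measurableSet_Iic]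
  have hexp : ∫ ω, (|U ω - a| - |U ω|) ∂μ = 2 * ∫ s in uIoc 0 a, |s - a| ∂μ.map U := by
    rw [← integral_abs_sub_sub_abs_of_median_zero _ hlaw_med,
      integral_map hUmeas.aemeasurable (by fun_prop)]
  have hdensity : ∫ s in uIoc 0 a, |s - a| ∂μ.map U = ∫ s in a..0, (s - a) * f s := by
    rw [hdens, setIntegral_withDensity_eq_setIntegral_toReal_smul' _ hfmeas.ennreal_ofReal
      (.of_forall fun _ => ENNReal.ofReal_lt_top), intervalIntegral_sub_mul_eq_setIntegral_uIoc]
    simp [ENNReal.toReal_ofReal (hf0 _), mul_comm]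
  refine ⟨integrable_abs_sub_sub_abs hUmeas.aestronglyMeasurable a, by rw [hexp, hdensity], ?_⟩
  rw [hexp]
  positivity
end
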